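/- Let (M, ℬ, μ, f) be a measure-preserving system and {U_n} a nested sequence of measurable sets with μ(U_n) > 0 and μ(U_n) → 0. Assume that for every ℓ ≥ 1 and every sufficiently large integer K the limit α̂_ℓ(K) = lim_{n→∞} μ_{U_n}(τ_{U_n}^{ℓ−1} ≤ K) exists, set α̂_ℓ = lim_{K→∞} α̂_ℓ(K), and assume Σ_{ℓ≥1} ℓ·α̂_ℓ < ∞. Then for every η > 0 there exists K₀ > 0 such that for all integers K' > K ≥ K₀ there exists n₀ with: for all n ≥ n₀, μ_{U_n}({x : ∃ i with K ≤ i ≤ K' and f^i(x) ∈ U_n}) ≤ η. -/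
import Mathlib


open MeasureTheory Filter Topology

/-- The number of returns to `U` within time `K`: `Σ_{i=1}^{K} 1_U(f^i x)`. -/
noncomputable def retCount {M : Type*} (f : M → M) (U : Set M) (K : ℕ) (x : M) : ℕ :=
  ∑ i ∈ Finset.Icc 1 K, U.indicator (fun _ => 1) (f^[i] x)

/-- The conditional probability `μ_U(τ_U^{ℓ-1} ≤ K)` of having at least `ℓ-1` returns
to `U` within time `K`, given being in `U`. -/
noncomputable def condRet {M : Type*} [MeasurableSpace M] (μ : Measure M)
    (f : M → M) (U : Set M) (K ℓ : ℕ) : ℝ :=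
  (μ (U ∩ {x | ℓ - 1 ≤ retCount f U K x})).toReal / (μ U).toReal

section helpers
set_option linter.unusedSectionVars false
variable {M : Type*} [MeasurableSpace M] {f : M → M} {U : Set M}

lemma retCount_mono {K K' : ℕ} (h : K ≤ K') (x : M) :
    retCount f U K x ≤ retCount f U K' x :=
  Finset.sum_le_sum_of_subset (Finset.Icc_subset_Icc_right h)

lemma retCount_le (K : ℕ) (x : M) : retCount f U K x ≤ K := by
  unfold retCount
  calc ∑ i ∈ Finset.Icc 1 K, U.indicator (fun _ => 1) (f^[i] x)
      ≤ ∑ _i ∈ Finset.Icc 1 K, 1 := by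
        apply Finset.sum_le_sum
        intro i _
        by_cases h : f^[i] x ∈ U <;> simp [Set.indicator, h]
    _ = K := by simp

lemma retCount_measurable (hf : Measurable f) (hU : MeasurableSet U) (K : ℕ) :
    Measurable (retCount f U K) := by
  apply Finset.measurable_sum
  intro i _
  exact (measurable_const.indicator hU).comp (hf.iterate i)

lemma rcSet_measurable (hf : Measurable f) (hU : MeasurableSet U) (K c : ℕ) :
    MeasurableSet {x | c ≤ retCount f U K x} :=
  retCount_measurable hf hU K measurableSet_Ici

lemma core {μ : Measure M} [IsFiniteMeasure μ] (hf : Measurable f) (hU : MeasurableSet U)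
    {K K' : ℕ} (hK : 1 ≤ K) (hKK' : K ≤ K') :
    (μ (U ∩ {x | ∃ i, K ≤ i ∧ i ≤ K' ∧ f^[i] x ∈ U})).toReal ≤
    ∑ r ∈ Finset.range K,
      ((μ (U ∩ {x | r + 1 ≤ retCount f U K' x})).toReal
        - (μ (U ∩ {x | r + 1 ≤ retCount f U (K - 1) x})).toReal) := by
  set W : Set M := {x | ∃ i, K ≤ i ∧ i ≤ K' ∧ f^[i] x ∈ U} with hWdef
  have hW : MeasurableSet W := by
    have : W = ⋃ i ∈ Finset.Icc K K', f^[i] ⁻¹' U := by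
      ext x
      simp only [hWdef, Set.mem_setOf_eq, Set.mem_iUnion, Finset.mem_Icc, Set.mem_preimage]
      tauto
    rw [this]
    exact Finset.measurableSet_biUnion _ fun i _ => (hf.iterate i) hU
  set P : ℕ → Set M := fun r => U ∩ W ∩ {x | retCount f U (K - 1) x = r} with hPdef
  have hPmeas : ∀ r, MeasurableSet (P r) := by
    intro r
    exact ((hU.inter hW).inter ((retCount_measurable hf hU (K-1)) (measurableSet_singleton r)))
  have hcover : U ∩ W = ⋃ r ∈ Finset.range K, P r := by
    ext x
    simp only [Set.mem_iUnion, Finset.mem_range, hPdef, Set.mem_inter_iff, Set.mem_setOf_eq]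
    constructor
    · rintro ⟨hxU, hxW⟩
      exact ⟨retCount f U (K-1) x, lt_of_le_of_lt (retCount_le _ _) (by omega), ⟨hxU, hxW⟩, rfl⟩
    · rintro ⟨r, _, ⟨h, _⟩⟩; exact h
  have hdisj : (Finset.range K : Set ℕ).PairwiseDisjoint P := by
    intro a _ b _ hab
    apply Set.disjoint_left.mpr
    rintro x ⟨_, hx⟩ ⟨_, hy⟩
    exact hab (hx.symm.trans hy)
  have hsum : μ (U ∩ W) = ∑ r ∈ Finset.range K, μ (P r) := by
    rw [hcover]
    exact measure_biUnion_finset hdisj fun r _ => hPmeas r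
  rw [hsum, ENNReal.toReal_sum (fun r _ => measure_ne_top μ _)]
  apply Finset.sum_le_sum
  intro r _
  set A := U ∩ {x | r + 1 ≤ retCount f U K' x} with hAdef
  set B := U ∩ {x | r + 1 ≤ retCount f U (K - 1) x} with hBdef
  have hBA : B ⊆ A := by
    rintro x ⟨hxU, hx⟩
    exact ⟨hxU, le_trans hx (retCount_mono (by omega) x)⟩
  have hPsub : P r ⊆ A \ B := by
    rintro x ⟨⟨hxU, hxW⟩, hrc⟩
    obtain ⟨i, hi1, hi2, hfiU⟩ := hxW
    have hrc' : retCount f U (K - 1) x = r := hrc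
    constructor
    · refine ⟨hxU, ?_⟩
      have hkey : retCount f U (K - 1) x + 1 ≤ retCount f U K' x := by
        have hdisj2 : Disjoint (Finset.Icc 1 (K - 1)) ({i} : Finset ℕ) := by
          simp only [Finset.disjoint_singleton_right, Finset.mem_Icc]
          omega
        have hsub2 : Finset.Icc 1 (K - 1) ∪ {i} ⊆ Finset.Icc 1 K' := by
          intro j hj
          simp only [Finset.mem_union, Finset.mem_Icc, Finset.mem_singleton] at hj ⊢
          omega
        calc retCount f U (K - 1) x + 1
            = ∑ j ∈ Finset.Icc 1 (K - 1) ∪ {i}, U.indicator (fun _ => 1) (f^[j] x) := by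
              rw [Finset.sum_union hdisj2]
              simp [retCount, Set.indicator_of_mem hfiU]
          _ ≤ retCount f U K' x := Finset.sum_le_sum_of_subset hsub2
      simp only [Set.mem_setOf_eq]
      omega
    · rintro ⟨_, hx⟩
      simp only [Set.mem_setOf_eq] at hx
      omega
  calc (μ (P r)).toReal ≤ (μ (A \ B)).toReal :=
        ENNReal.toReal_mono (measure_ne_top μ _) (measure_mono hPsub)
    _ = (μ A).toReal - (μ B).toReal := by
        rw [measure_diff hBA ((hU.inter (rcSet_measurable hf hU (K-1) (r+1))).nullMeasurableSet)
          (measure_ne_top μ _)]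
        exact ENNReal.toReal_sub_of_le (measure_mono hBA) (measure_ne_top μ _)

lemma condRet_nonneg {μ : Measure M} (K ℓ : ℕ) : 0 ≤ condRet μ f U K ℓ :=
  div_nonneg ENNReal.toReal_nonneg ENNReal.toReal_nonneg

lemma condRet_mono {μ : Measure M} [IsFiniteMeasure μ] {K K' : ℕ} (h : K ≤ K') (ℓ : ℕ) :
    condRet μ f U K ℓ ≤ condRet μ f U K' ℓ := by
  unfold condRet
  apply div_le_div_of_nonneg_right _ ENNReal.toReal_nonneg
  exact ENNReal.toReal_mono (measure_ne_top μ _) (measure_mono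
    (Set.inter_subset_inter_right _ (fun x hx => le_trans hx (retCount_mono h x))))

end helpers

/-- Unlikely long clusters: under summability of `ℓ·α̂_ℓ`, for every
`η > 0` there is `K₀ > 0` such that for all `K' > K ≥ K₀` and all large `n`, the
conditional probability (given `U n`) of entering `U n` at some time `i ∈ [K, K']`
is at most `η`. -/
theorem unlikely_long_clusters
    {M : Type*} [MeasurableSpace M] (μ : Measure M) [IsProbabilityMeasure μ]
    (f : M → M) (hf : MeasurePreserving f μ μ)
    (U : ℕ → Set M) (hmeas : ∀ n, MeasurableSet (U n))
    (hnested : ∀ n, U (n + 1) ⊆ U n) (hpos : ∀ n, 0 < μ (U n))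
    (hto0 : Tendsto (fun n => μ (U n)) atTop (nhds 0))
    (K₀ : ℕ) (A : ℕ → ℕ → ℝ)
    (hA : ∀ ℓ, 1 ≤ ℓ → ∀ K, K₀ ≤ K →
        Tendsto (fun n => condRet μ f (U n) K ℓ) atTop (nhds (A ℓ K)))
    (hatα : ℕ → ℝ)
    (hhatα : ∀ ℓ, 1 ≤ ℓ → Tendsto (fun K => A ℓ K) atTop (nhds (hatα ℓ)))
    (hsum : Summable (fun ℓ : ℕ => (ℓ : ℝ) * hatα ℓ)) :
    ∀ η : ℝ, 0 < η → ∃ Kc : ℕ, 0 < Kc ∧ ∀ K K' : ℕ, Kc ≤ K → K < K' →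
      ∃ n₀, ∀ n ≥ n₀,
        (μ (U n ∩ {x | ∃ i, K ≤ i ∧ i ≤ K' ∧ f^[i] x ∈ U n})).toReal / (μ (U n)).toReal
          ≤ η := by
  intro η hη
  have hfm : Measurable f := hf.measurable
  -- nonnegativity facts
  have hAnn : ∀ ℓ, 1 ≤ ℓ → ∀ J, K₀ ≤ J → 0 ≤ A ℓ J := fun ℓ hℓ J hJ =>
    ge_of_tendsto' (hA ℓ hℓ J hJ) (fun n => condRet_nonneg _ _)
  have hatα_nn : ∀ ℓ, 1 ≤ ℓ → 0 ≤ hatα ℓ := fun ℓ hℓ =>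
    ge_of_tendsto (hhatα ℓ hℓ) (eventually_atTop.2 ⟨K₀, fun J hJ => hAnn ℓ hℓ J hJ⟩)
  have hterm_nn : ∀ ℓ : ℕ, 0 ≤ (ℓ : ℝ) * hatα ℓ := by
    intro ℓ
    rcases Nat.eq_zero_or_pos ℓ with h | h
    · simp [h]
    · exact mul_nonneg (by positivity) (hatα_nn ℓ h)
  -- monotonicity of A in K
  have hA_mono : ∀ ℓ, 1 ≤ ℓ → ∀ J J', K₀ ≤ J → J ≤ J' → A ℓ J ≤ A ℓ J' := by
    intro ℓ hℓ J J' hJ hJJ'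
    exact le_of_tendsto_of_tendsto' (hA ℓ hℓ J hJ) (hA ℓ hℓ J' (hJ.trans hJJ'))
      (fun n => condRet_mono hJJ' ℓ)
  have hA_le : ∀ ℓ, 1 ≤ ℓ → ∀ J, K₀ ≤ J → A ℓ J ≤ hatα ℓ := by
    intro ℓ hℓ J hJ
    exact ge_of_tendsto (hhatα ℓ hℓ)
      (eventually_atTop.2 ⟨J, fun J' hJ' => hA_mono ℓ hℓ J J' hJ hJ'⟩)
  -- choose L
  set C : ℝ := ∑' ℓ : ℕ, (ℓ : ℝ) * hatα ℓ with hC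
  have hC_nn : 0 ≤ C := tsum_nonneg hterm_nn
  set L : ℕ := ⌈4 * C / η⌉₊ + 1 with hL
  have hLpos : (0 : ℝ) < L := by positivity
  have hCL : C / L ≤ η / 4 := by
    rw [div_le_iff₀ hLpos]
    have h1 : 4 * C / η ≤ (L : ℝ) := le_trans (Nat.le_ceil _) (by push_cast [hL]; linarith)
    rw [div_le_iff₀ hη] at h1
    linarith
  set δ : ℝ := η / (4 * (L + 1)) with hδdef
  have hδpos : 0 < δ := by positivity
  -- choose N such that A ℓ J is δ-close to hatα ℓ for ℓ ∈ [2, L], J ≥ N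
  have hev : ∀ᶠ J in atTop, ∀ ℓ ∈ Finset.Icc 2 L, hatα ℓ - δ < A ℓ J := by
    rw [Finset.eventually_all]
    intro ℓ hℓ
    have hℓ1 : 1 ≤ ℓ := le_trans (by norm_num) (Finset.mem_Icc.mp hℓ).1
    exact (hhatα ℓ hℓ1).eventually_const_lt (by linarith)
  obtain ⟨N, hN⟩ := eventually_atTop.mp hev
  refine ⟨max N K₀ + 1, Nat.succ_pos _, ?_⟩
  intro K K' hK hKK'
  have hK1 : 1 ≤ K := le_trans (Nat.succ_le_succ (Nat.zero_le _)) hK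
  have hKm1N : N ≤ K - 1 := by omega
  have hKm1K₀ : K₀ ≤ K - 1 := by omega
  have hK'K₀ : K₀ ≤ K' := by omega
  have hKK'le : K ≤ K' := le_of_lt hKK'
  -- the limit sum S
  set S : ℝ := ∑ r ∈ Finset.range K, (A (r + 2) K' - A (r + 2) (K - 1)) with hS
  have hS_le : S ≤ η / 2 := by
    have step1 : S ≤ ∑ r ∈ Finset.range K, (hatα (r + 2) - A (r + 2) (K - 1)) := by
      apply Finset.sum_le_sum
      intro r _
      have := hA_le (r + 2) (by omega) K' hK'K₀
      linarith
    have step2 : ∑ r ∈ Finset.range K, (hatα (r + 2) - A (r + 2) (K - 1))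
        = ∑ r ∈ (Finset.range K).filter (fun r => r + 2 ≤ L),
            (hatα (r + 2) - A (r + 2) (K - 1))
          + ∑ r ∈ (Finset.range K).filter (fun r => ¬ (r + 2 ≤ L)),
            (hatα (r + 2) - A (r + 2) (K - 1)) :=
      (Finset.sum_filter_add_sum_filter_not _ _ _).symm
    have near : ∑ r ∈ (Finset.range K).filter (fun r => r + 2 ≤ L),
        (hatα (r + 2) - A (r + 2) (K - 1)) ≤ η / 4 := by
      have hcard : ((Finset.range K).filter (fun r => r + 2 ≤ L)).card ≤ L + 1 := by
        have hsub : (Finset.range K).filter (fun r => r + 2 ≤ L) ⊆ Finset.range (L + 1) := by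
          intro r hr
          simp only [Finset.mem_filter, Finset.mem_range] at hr ⊢
          omega
        simpa using Finset.card_le_card hsub
      have hbound : ∀ r ∈ (Finset.range K).filter (fun r => r + 2 ≤ L),
          hatα (r + 2) - A (r + 2) (K - 1) ≤ δ := by
        intro r hr
        simp only [Finset.mem_filter, Finset.mem_range] at hr
        have := hN (K - 1) hKm1N (r + 2) (Finset.mem_Icc.mpr ⟨by omega, hr.2⟩)
        linarith
      calc ∑ r ∈ (Finset.range K).filter (fun r => r + 2 ≤ L),
            (hatα (r + 2) - A (r + 2) (K - 1))
          ≤ ((Finset.range K).filter (fun r => r + 2 ≤ L)).card • δ :=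
            Finset.sum_le_card_nsmul _ _ δ hbound
        _ = (((Finset.range K).filter (fun r => r + 2 ≤ L)).card : ℝ) * δ := by
            rw [nsmul_eq_mul]
        _ ≤ (L + 1 : ℝ) * δ := by
            apply mul_le_mul_of_nonneg_right _ hδpos.le
            exact_mod_cast hcard
        _ = η / 4 := by
            rw [hδdef]; field_simp
    have far : ∑ r ∈ (Finset.range K).filter (fun r => ¬ (r + 2 ≤ L)),
        (hatα (r + 2) - A (r + 2) (K - 1)) ≤ η / 4 := by
      set s := (Finset.range K).filter (fun r => ¬ (r + 2 ≤ L)) with hs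
      have h1 : ∀ r ∈ s, hatα (r + 2) - A (r + 2) (K - 1)
          ≤ ((r + 2 : ℕ) : ℝ) * hatα (r + 2) / L := by
        intro r hr
        simp only [hs, Finset.mem_filter, Finset.mem_range] at hr
        have hAnn' := hAnn (r + 2) (by omega) (K - 1) hKm1K₀
        have h2 : hatα (r + 2) ≤ ((r + 2 : ℕ) : ℝ) * hatα (r + 2) / L := by
          rw [le_div_iff₀ hLpos]
          have : (L : ℝ) ≤ ((r + 2 : ℕ) : ℝ) := by exact_mod_cast Nat.le_of_lt (by omega)
          calc hatα (r + 2) * (L : ℝ) ≤ hatα (r + 2) * ((r + 2 : ℕ) : ℝ) :=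
                mul_le_mul_of_nonneg_left this (hatα_nn _ (by omega))
            _ = ((r + 2 : ℕ) : ℝ) * hatα (r + 2) := mul_comm _ _
        linarith
      have h3 : ∑ r ∈ s, ((r + 2 : ℕ) : ℝ) * hatα (r + 2) ≤ C := by
        have himg : ∑ ℓ ∈ s.image (fun r => r + 2), ((ℓ : ℕ) : ℝ) * hatα ℓ
            = ∑ r ∈ s, ((r + 2 : ℕ) : ℝ) * hatα (r + 2) :=
          Finset.sum_image (f := fun ℓ : ℕ => ((ℓ : ℕ) : ℝ) * hatα ℓ)
            (fun x _ y _ h => by omega)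
        rw [← himg]
        exact Summable.sum_le_tsum _ (fun i _ => hterm_nn i) hsum
      calc ∑ r ∈ s, (hatα (r + 2) - A (r + 2) (K - 1))
          ≤ ∑ r ∈ s, ((r + 2 : ℕ) : ℝ) * hatα (r + 2) / L := Finset.sum_le_sum h1
        _ = (∑ r ∈ s, ((r + 2 : ℕ) : ℝ) * hatα (r + 2)) / L := by rw [Finset.sum_div]
        _ ≤ C / L := by
            apply div_le_div_of_nonneg_right h3 hLpos.le
        _ ≤ η / 4 := hCL
    linarith
  -- convergence of the conditional sums
  set seq : ℕ → ℝ := fun n => ∑ r ∈ Finset.range K,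
    (condRet μ f (U n) K' (r + 2) - condRet μ f (U n) (K - 1) (r + 2)) with hseq
  have hconv : Tendsto seq atTop (nhds S) := by
    rw [hS]
    apply tendsto_finset_sum
    intro r _
    exact (hA (r + 2) (by omega) K' hK'K₀).sub (hA (r + 2) (by omega) (K - 1) hKm1K₀)
  have hevlt : ∀ᶠ n in atTop, seq n < η :=
    hconv.eventually_lt_const (by linarith)
  obtain ⟨n₀, hn₀⟩ := eventually_atTop.mp hevlt
  refine ⟨n₀, fun n hn => ?_⟩
  have hb : (μ (U n ∩ {x | ∃ i, K ≤ i ∧ i ≤ K' ∧ f^[i] x ∈ U n})).toReal / (μ (U n)).toReal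
      ≤ seq n := by
    have hcore := core (μ := μ) hfm (hmeas n) hK1 hKK'le
    calc (μ (U n ∩ {x | ∃ i, K ≤ i ∧ i ≤ K' ∧ f^[i] x ∈ U n})).toReal / (μ (U n)).toReal
        ≤ (∑ r ∈ Finset.range K,
            ((μ (U n ∩ {x | r + 1 ≤ retCount f (U n) K' x})).toReal
              - (μ (U n ∩ {x | r + 1 ≤ retCount f (U n) (K - 1) x})).toReal))
            / (μ (U n)).toReal :=
          div_le_div_of_nonneg_right hcore ENNReal.toReal_nonneg
      _ = seq n := by
          rw [hseq, Finset.sum_div]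
          apply Finset.sum_congr rfl
          intro r _
          rw [sub_div]
          rfl
  exact le_of_lt (lt_of_le_of_lt hb (hn₀ n hn))
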